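/- arXiv:1704.04581 — 4 statements merged into one kernel-verified Lean document; each statement's English description precedes it below -/
import Mathlib

section
/- Consider minimizing $f(x) = -\frac{1}{6}\mathcal{A}x^3$ over the set $S = \{x \in \mathbb{R}^{n_1 n_2} : x \geq 0,\ e^T \bar x_i = 1 \text{ for } i=1,\dots,n_1\}$, where $\mathcal{A}$ is a nonnegative symmetric tensor whose nonzero entries $\mathcal{A}_{ljk}$ have $l,j,k$ in three distinct blocks. Then there exists a global minimizer $x^*$ of $f$ over $S$ with exactly $n_1$ nonzero entries (one per block, each equal to 1). -/
/-!
Every monomial of `𝒜x³` meets three distinct blocks, so `f` is affine in each block separately.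
Under the product weights `∏ i, y i (σ i)` on the choices `σ` of one coordinate per block, the
coordinates are independent, so the average of a monomial over distinct blocks factors into the
product of its marginals. Hence for feasible `y`, `f y` is the average of `f` over the vertices
of `S` (the points with a single `1` in each block) and the best vertex is a global minimizer.
-/

open Finset

section ProductOfSimplices

variable {ι κ : Type*} [DecidableEq κ]

def vertex (σ : ι → κ) (i : ι) (v : κ) : ℝ := if σ i = v then 1 else 0

lemma vertex_nonneg (σ : ι → κ) (i : ι) (v : κ) : 0 ≤ vertex σ i v := by
  unfold vertex; split_ifs <;> norm_num

lemma vertex_self (σ : ι → κ) (i : ι) : vertex σ i (σ i) = 1 := if_pos rfl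

lemma vertex_of_ne {σ : ι → κ} {i : ι} {v : κ} (h : v ≠ σ i) : vertex σ i v = 0 :=
  if_neg (Ne.symm h)

variable [Fintype κ]

lemma sum_vertex (σ : ι → κ) (i : ι) : ∑ v, vertex σ i v = 1 := by
  simp [vertex]

lemma card_filter_vertex_ne_zero [Fintype ι] [DecidableEq ι] (σ : ι → κ) :
    (univ.filter fun iv : ι × κ => vertex σ iv.1 iv.2 ≠ 0).card = Fintype.card ι := by
  have hgraph : (univ.filter fun iv : ι × κ => vertex σ iv.1 iv.2 ≠ 0)
      = univ.image fun i => (i, σ i) := by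
    ext ⟨i, v⟩
    simp [vertex, eq_comm]
  rw [hgraph, card_image_of_injective _ fun i j h => congrArg Prod.fst h, card_univ]

end ProductOfSimplices

section ProductWeights

variable {ι κ : Type*} [Fintype ι] [DecidableEq ι] [Fintype κ]

lemma sum_prod_mul_prod_eq_prod_sum (y h : ι → κ → ℝ) :
    ∑ σ : ι → κ, (∏ i, y i (σ i)) * ∏ i, h i (σ i) = ∏ i, ∑ v, y i v * h i v := by
  simp only [← prod_mul_distrib, Fintype.prod_sum]

lemma sum_prod_eq_one {y : ι → κ → ℝ} (hy : ∀ i, ∑ v, y i v = 1) :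
    ∑ σ : ι → κ, ∏ i, y i (σ i) = 1 := by
  simp [← Fintype.prod_sum, hy]

variable [DecidableEq κ]

lemma sum_prod_mul_prod_vertex {y : ι → κ → ℝ} (hy : ∀ i, ∑ v, y i v = 1)
    (s : Finset ι) (t : ι → κ) :
    ∑ σ : ι → κ, (∏ i, y i (σ i)) * ∏ i ∈ s, vertex σ i (t i) = ∏ i ∈ s, y i (t i) := by
  set h : ι → κ → ℝ := fun i v => if i ∈ s then vertex t i v else 1
  have hvertex (σ : ι → κ) : ∏ i ∈ s, vertex σ i (t i) = ∏ i, h i (σ i) := by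
    simp [h, prod_ite_mem, vertex, eq_comm]
  have hmarginal (i : ι) : ∑ v, y i v * h i v = if i ∈ s then y i (t i) else 1 := by
    by_cases hi : i ∈ s <;> simp [h, hi, hy, vertex]
  simp_rw [hvertex, sum_prod_mul_prod_eq_prod_sum, hmarginal, prod_ite_mem, univ_inter]

lemma sum_prod_mul_vertex_mul_vertex_mul_vertex {y : ι → κ → ℝ} (hy : ∀ i, ∑ v, y i v = 1)
    {a b c : ι × κ} (hab : a.1 ≠ b.1) (hac : a.1 ≠ c.1) (hbc : b.1 ≠ c.1) :
    ∑ σ : ι → κ, (∏ i, y i (σ i)) * (vertex σ a.1 a.2 * vertex σ b.1 b.2 * vertex σ c.1 c.2)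
      = y a.1 a.2 * y b.1 b.2 * y c.1 c.2 := by
  set t : ι → κ := fun i => if i = a.1 then a.2 else if i = b.1 then b.2 else c.2
  simpa [prod_insert, hab, hac, hbc, hab.symm, hac.symm, hbc.symm, t, mul_assoc] using
    sum_prod_mul_prod_vertex hy {a.1, b.1, c.1} t

def cubicForm (A : ι × κ → ι × κ → ι × κ → ℝ) (x : ι → κ → ℝ) : ℝ :=
  ∑ a, ∑ b, ∑ c, A a b c * x a.1 a.2 * x b.1 b.2 * x c.1 c.2

lemma cubicForm_eq_sum_prod_mul_cubicForm_vertex {A : ι × κ → ι × κ → ι × κ → ℝ}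
    (hA : ∀ a b c, A a b c ≠ 0 → a.1 ≠ b.1 ∧ a.1 ≠ c.1 ∧ b.1 ≠ c.1)
    {y : ι → κ → ℝ} (hy : ∀ i, ∑ v, y i v = 1) :
    cubicForm A y = ∑ σ : ι → κ, (∏ i, y i (σ i)) * cubicForm A (vertex σ) := by
  have hterm (a b c : ι × κ) : A a b c * y a.1 a.2 * y b.1 b.2 * y c.1 c.2
      = ∑ σ : ι → κ, (∏ i, y i (σ i)) *
          (A a b c * vertex σ a.1 a.2 * vertex σ b.1 b.2 * vertex σ c.1 c.2) := by
    by_cases h0 : A a b c = 0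
    · simp [h0]
    obtain ⟨hab, hac, hbc⟩ := hA a b c h0
    simp_rw [mul_assoc (A a b c), mul_left_comm _ (A a b c), ← mul_sum,
      sum_prod_mul_vertex_mul_vertex_mul_vertex hy hab hac hbc]
  simp_rw [cubicForm, hterm, mul_sum]
  symm
  rw [sum_comm]
  simp_rw [sum_comm (γ := ι → κ) (s := univ)]

end ProductWeights

lemma exists_vertex_forall_le {ι κ : Type*} [Fintype ι] [DecidableEq ι] [Fintype κ]
    [DecidableEq κ] [Nonempty κ] {F : (ι → κ → ℝ) → ℝ}
    (hF : ∀ y, (∀ i, ∑ v, y i v = 1) → F y = ∑ σ : ι → κ, (∏ i, y i (σ i)) * F (vertex σ)) :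
    ∃ σ : ι → κ, ∀ y, (∀ i v, 0 ≤ y i v) → (∀ i, ∑ v, y i v = 1) → F (vertex σ) ≤ F y := by
  obtain ⟨σ₀, -, hσ₀⟩ := exists_min_image univ (fun σ : ι → κ => F (vertex σ)) univ_nonempty
  refine ⟨σ₀, fun y hy₀ hy => ?_⟩
  calc F (vertex σ₀) = ∑ σ : ι → κ, (∏ i, y i (σ i)) * F (vertex σ₀) := by
        rw [← sum_mul, sum_prod_eq_one hy, one_mul]
    _ ≤ ∑ σ : ι → κ, (∏ i, y i (σ i)) * F (vertex σ) :=
        sum_le_sum fun σ _ => mul_le_mul_of_nonneg_left (hσ₀ σ (mem_univ σ))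
          (prod_nonneg fun i _ => hy₀ i (σ i))
    _ = F y := (hF y hy).symm

theorem stmt_7_general (n1 n2 : ℕ) (hn2 : 0 < n2)
    (A : (Fin n1 × Fin n2) → (Fin n1 × Fin n2) → (Fin n1 × Fin n2) → ℝ)
    (hblk : ∀ a b c, A a b c ≠ 0 → a.1 ≠ b.1 ∧ a.1 ≠ c.1 ∧ b.1 ≠ c.1)
    (f : (Fin n1 → Fin n2 → ℝ) → ℝ)
    (hf : ∀ x, f x = -(1/6) * ∑ a : Fin n1 × Fin n2, ∑ b : Fin n1 × Fin n2,
      ∑ c : Fin n1 × Fin n2, A a b c * x a.1 a.2 * x b.1 b.2 * x c.1 c.2) :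
    ∃ x : Fin n1 → Fin n2 → ℝ,
      (∀ i p, 0 ≤ x i p) ∧ (∀ i, ∑ p, x i p = 1) ∧
      (∀ i, ∃ p, x i p = 1 ∧ ∀ q, q ≠ p → x i q = 0) ∧
      (Finset.univ.filter fun ip : Fin n1 × Fin n2 => x ip.1 ip.2 ≠ 0).card = n1 ∧
      ∀ y : Fin n1 → Fin n2 → ℝ,
        (∀ i p, 0 ≤ y i p) → (∀ i, ∑ p, y i p = 1) → f x ≤ f y := by
  have : Nonempty (Fin n2) := ⟨⟨0, hn2⟩⟩
  have hf_cubic : ∀ x, f x = -(1/6) * cubicForm A x := hf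
  obtain ⟨σ, hσ⟩ := exists_vertex_forall_le (F := f) fun y hy => by
    rw [hf_cubic, cubicForm_eq_sum_prod_mul_cubicForm_vertex hblk hy, mul_sum]
    exact sum_congr rfl fun σ _ => by rw [hf_cubic]; ring
  refine ⟨vertex σ, vertex_nonneg σ, sum_vertex σ,
    fun i => ⟨σ i, vertex_self σ i, fun q => vertex_of_ne⟩, ?_, hσ⟩
  simpa using card_filter_vertex_ne_zero σ

/-- the relaxation of hypergraph matching has a global minimizer with exactly
one nonzero entry per block, each equal to 1 (hence `n1` nonzero entries in total). -/
theorem stmt_7 (n1 n2 : ℕ) (hn2 : 0 < n2)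
    (A : (Fin n1 × Fin n2) → (Fin n1 × Fin n2) → (Fin n1 × Fin n2) → ℝ)
    (hA0 : ∀ a b c, 0 ≤ A a b c)
    (hsym : ∀ a b c, A a b c = A b a c ∧ A a b c = A a c b)
    (hblk : ∀ a b c, A a b c ≠ 0 → a.1 ≠ b.1 ∧ a.1 ≠ c.1 ∧ b.1 ≠ c.1)
    (f : (Fin n1 → Fin n2 → ℝ) → ℝ)
    (hf : ∀ x, f x = -(1/6) * ∑ a : Fin n1 × Fin n2, ∑ b : Fin n1 × Fin n2,
      ∑ c : Fin n1 × Fin n2, A a b c * x a.1 a.2 * x b.1 b.2 * x c.1 c.2) :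
    ∃ x : Fin n1 → Fin n2 → ℝ,
      (∀ i p, 0 ≤ x i p) ∧ (∀ i, ∑ p, x i p = 1) ∧
      (∀ i, ∃ p, x i p = 1 ∧ ∀ q, q ≠ p → x i q = 0) ∧
      (Finset.univ.filter fun ip : Fin n1 × Fin n2 => x ip.1 ip.2 ≠ 0).card = n1 ∧
      ∀ y : Fin n1 → Fin n2 → ℝ,
        (∀ i p, 0 ≤ y i p) → (∀ i, ∑ p, y i p = 1) → f x ≤ f y :=
  stmt_7_general n1 n2 hn2 A hblk f hf
end

section
/- Let $\hat f: \mathbb{R}^n \to \mathbb{R}$ be continuous and affine in each block $\bar x_i$ (with $\nabla_{\bar x_i}\hat f$ independent of $\bar x_i$, and $\hat f$ decomposing as $\hat f(x) = \bar x_i^T \nabla_{\bar x_i}\hat f(x) + \hat f^{-i}(x_{-i})$ up to an additive term depending only on $x_{-i}$). Consider minimizing $\hat f$ over $\{x \geq 0,\ e^T \bar x_i = \alpha_i,\ i = 1,\dots,n_1\}$ with $\alpha_i > 0$ and blocks $\bar x_i \in \mathbb{R}^{m_i}$, $\sum_i m_i = n$. Then there exists a global minimizer $x^*$ with exactly one nonzero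 entry per block (so $\|x^*\|_0 = n_1$), and $x^*$ is also a global minimizer of the same problem with the added constraint $\|x\|_0 \leq n_1$. -/
/-!
Along each block the objective is affine, so with the other blocks fixed it is concave on the
block's scaled simplex, and Jensen's inequality puts a vertex of that simplex at or below the
current point. Replacing the blocks one at a time by such vertices shows that every feasible
point is dominated by a vertex of the product of simplices; there are finitely many vertices,
so the best one is a global minimizer, and it has exactly one nonzero entry per block.
-/

open Finset Function

theorem concaveOn_univ_of_lineAffine {𝕜 E : Type*} [Field 𝕜] [LinearOrder 𝕜]
    [IsStrictOrderedRing 𝕜] [AddCommGroup E] [Module 𝕜 E] {g : E → 𝕜}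
    (hg : ∀ (x d : E) (t : 𝕜), g (x + t • d) = g x + t * (g (x + d) - g x)) :
    ConcaveOn 𝕜 Set.univ g := by
  refine ⟨convex_univ, fun x _ y _ a b _ _ hab => ?_⟩
  obtain rfl : a = 1 - b := by linear_combination hab
  have hxy : (1 - b) • x + b • y = x + b • (y - x) := by module
  rw [hxy, hg, add_sub_cancel, smul_eq_mul, smul_eq_mul]
  exact le_of_eq (by ring)

theorem ConcaveOn.exists_single_sum_le {κ : Type*} [Fintype κ] [DecidableEq κ]
    {φ : (κ → ℝ) → ℝ} (hφ : ConcaveOn ℝ Set.univ φ) {v : κ → ℝ} (hv : 0 ≤ v)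
    (hsum : 0 < ∑ q, v q) : ∃ p, φ (Pi.single p (∑ q, v q)) ≤ φ v := by
  obtain ⟨p, -, hp⟩ := hφ.exists_le_of_centerMass (t := univ) (w := v)
    (p := fun p => Pi.single p (∑ q, v q)) (fun p _ => hv p) hsum fun _ _ => Set.mem_univ _
  refine ⟨p, hp.trans_eq (congrArg φ ?_)⟩
  ext q
  simp only [centerMass, Pi.smul_apply, Finset.sum_apply, Pi.single_apply, smul_eq_mul, mul_ite,
    mul_zero, sum_ite_eq, mem_univ, ↓reduceIte]
  field_simp

section Blocks

variable {ι : Type*} {κ : ι → Type*}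

def BlockAffine (f : (∀ i, κ i → ℝ) → ℝ) : Prop :=
  ∀ (i : ι) (x d : ∀ i, κ i → ℝ), (∀ i', i' ≠ i → ∀ p, d i' p = 0) →
    ∀ t : ℝ, f (x + t • d) = f x + t * (f (x + d) - f x)

variable {f : (∀ i, κ i → ℝ) → ℝ}

theorem BlockAffine.concaveOn_update [DecidableEq ι] (hf : BlockAffine f) (i : ι)
    (y : ∀ i, κ i → ℝ) :
    ConcaveOn ℝ Set.univ fun v => f (update y i v) := by
  refine concaveOn_univ_of_lineAffine fun v w t => ?_
  have hupd : ∀ s : ℝ,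
      update y i (v + s • w) = update y i v + s • update (0 : ∀ i, κ i → ℝ) i w := by
    intro s
    ext j q
    rcases eq_or_ne j i with rfl | hji <;> simp [update_of_ne, *]
  have hw : ∀ i', i' ≠ i → ∀ p, update (0 : ∀ i, κ i → ℝ) i w i' p = 0 := by
    intro i' hi' p
    simp [update_of_ne hi']
  have hupd_one := hupd 1
  rw [one_smul, one_smul] at hupd_one
  rw [hupd, hupd_one]
  exact hf i _ _ hw t

variable [∀ i, Fintype (κ i)] [∀ i, DecidableEq (κ i)]

def blockSimplex (α : ι → ℝ) : Set (∀ i, κ i → ℝ) :=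
  {y | (∀ i p, 0 ≤ y i p) ∧ ∀ i, ∑ p, y i p = α i}

def simplexVertex (α : ι → ℝ) (c : ∀ i, κ i) : ∀ i, κ i → ℝ :=
  fun i => Pi.single (c i) (α i)

variable {α : ι → ℝ} {y : ∀ i, κ i → ℝ}

theorem update_single_mem_blockSimplex [DecidableEq ι] (hy : y ∈ blockSimplex α) {i : ι}
    (hαi : 0 ≤ α i) (p : κ i) : update y i (Pi.single p (α i)) ∈ blockSimplex α := by
  constructor
  · intro j q
    rcases eq_or_ne j i with rfl | hji
    · rw [update_self]
      exact (Pi.single_nonneg (α := fun _ => ℝ)).2 hαi q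
    · rw [update_of_ne hji]
      exact hy.1 j q
  · intro j
    rcases eq_or_ne j i with rfl | hji
    · rw [update_self, Finset.sum_pi_single']
      simp
    · rw [update_of_ne hji]
      exact hy.2 j

theorem simplexVertex_mem_blockSimplex (hα : ∀ i, 0 ≤ α i) (c : ∀ i, κ i) :
    simplexVertex α c ∈ blockSimplex α :=
  ⟨fun i => (Pi.single_nonneg (α := fun _ => ℝ)).2 (hα i), fun i => by simp [simplexVertex]⟩

theorem card_filter_simplexVertex_ne_zero [Fintype ι] (hα : ∀ i, α i ≠ 0)
    (c : ∀ i, κ i) :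
    (univ.filter fun s : Σ i, κ i => simplexVertex α c s.1 s.2 ≠ 0).card =
      Fintype.card ι := by
  rw [Finset.card_filter, Fintype.sum_sigma]
  simp [simplexVertex, Pi.single_apply, hα]

theorem BlockAffine.exists_update_single_le [DecidableEq ι] (hf : BlockAffine f)
    (hy : y ∈ blockSimplex α) {i : ι} (hαi : 0 < α i) :
    ∃ p, f (update y i (Pi.single p (α i))) ≤ f y := by
  have hsum := hy.2 i
  obtain ⟨p, hp⟩ := (hf.concaveOn_update i y).exists_single_sum_le (hy.1 i) (hsum ▸ hαi)
  exact ⟨p, by simpa only [hsum, update_eq_self] using hp⟩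

theorem BlockAffine.exists_simplexVertex_le [Fintype ι] [DecidableEq ι] (hf : BlockAffine f)
    (hα : ∀ i, 0 < α i) (hy : y ∈ blockSimplex α) :
    ∃ c, f (simplexVertex α c) ≤ f y := by
  suffices ∀ S : Finset ι, ∀ y ∈ blockSimplex α,
      (∀ i ∉ S, ∃ p, y i = Pi.single p (α i)) → ∃ c, f (simplexVertex α c) ≤ f y
    from this univ y hy (by simp)
  intro S
  induction S using Finset.induction_on with
  | empty =>
    intro y _ hvertex
    choose c hc using fun i => hvertex i (Finset.notMem_empty i)
    exact ⟨c, (congrArg f (funext hc)).symm.le⟩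
  | insert a S _ ih =>
    intro y hy hvertex
    obtain ⟨p, hp⟩ := hf.exists_update_single_le hy (hα a)
    obtain ⟨c, hc⟩ := ih _ (update_single_mem_blockSimplex hy (hα a).le p) fun i hi => by
      rcases eq_or_ne i a with rfl | hia
      · exact ⟨p, update_self ..⟩
      · rw [update_of_ne hia]
        exact hvertex i (by simp [hia, hi])
    exact ⟨c, hc.trans hp⟩

end Blocks

theorem stmt_10_general (n1 : ℕ) (m : Fin n1 → ℕ) (hm : ∀ i, 0 < m i)
    (α : Fin n1 → ℝ) (hα : ∀ i, 0 < α i)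
    (f : ((i : Fin n1) → Fin (m i) → ℝ) → ℝ)
    (haffine : ∀ (i : Fin n1) (x d : (i : Fin n1) → Fin (m i) → ℝ),
      (∀ i', i' ≠ i → ∀ p, d i' p = 0) →
      ∀ t : ℝ, f (x + t • d) = f x + t * (f (x + d) - f x)) :
    ∃ x : (i : Fin n1) → Fin (m i) → ℝ,
      (∀ i p, 0 ≤ x i p) ∧ (∀ i, ∑ p, x i p = α i) ∧
      (∀ i, ∃ p, x i p = α i ∧ ∀ q, q ≠ p → x i q = 0) ∧
      (Finset.univ.filter fun s : Σ i : Fin n1, Fin (m i) => x s.1 s.2 ≠ 0).card = n1 ∧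
      (∀ y : (i : Fin n1) → Fin (m i) → ℝ,
        (∀ i p, 0 ≤ y i p) → (∀ i, ∑ p, y i p = α i) → f x ≤ f y) ∧
      (∀ y : (i : Fin n1) → Fin (m i) → ℝ,
        (∀ i p, 0 ≤ y i p) → (∀ i, ∑ p, y i p = α i) →
        (Finset.univ.filter fun s : Σ i : Fin n1, Fin (m i) => y s.1 s.2 ≠ 0).card ≤ n1 →
        f x ≤ f y) := by
  have hf : BlockAffine f := haffine
  have : Nonempty (∀ i, Fin (m i)) := ⟨fun i => ⟨0, hm i⟩⟩
  obtain ⟨c, hc⟩ := Finite.exists_min fun c => f (simplexVertex α c)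
  have hmin : ∀ y ∈ blockSimplex α, f (simplexVertex α c) ≤ f y := fun y hy =>
    let ⟨c', hc'⟩ := hf.exists_simplexVertex_le hα hy
    (hc c').trans hc'
  obtain ⟨hx₀, hx₁⟩ := simplexVertex_mem_blockSimplex (fun i => (hα i).le) c
  refine ⟨simplexVertex α c, hx₀, hx₁, fun i => ⟨c i, ?_, fun q hq => ?_⟩, ?_,
    fun y hy₀ hy₁ => hmin y ⟨hy₀, hy₁⟩,
    fun y hy₀ hy₁ _ => hmin y ⟨hy₀, hy₁⟩⟩
  · simp [simplexVertex]
  · simp [simplexVertex, hq]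
  · rw [card_filter_simplexVertex_ne_zero fun i => (hα i).ne', Fintype.card_fin]

/-- for a continuous objective that is affine in each block, the problem of
minimizing over a product of scaled simplices (blocks of sizes `m i`, block sums `α i`)
has a global minimizer with exactly one nonzero entry per block (equal to `α i`), which
is also a global minimizer under the additional sparsity constraint `‖x‖₀ ≤ n1`. -/
theorem stmt_10 (n1 : ℕ) (m : Fin n1 → ℕ) (hm : ∀ i, 0 < m i)
    (α : Fin n1 → ℝ) (hα : ∀ i, 0 < α i)
    (f : ((i : Fin n1) → Fin (m i) → ℝ) → ℝ)
    (hcont : Continuous f)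
    (haffine : ∀ (i : Fin n1) (x d : (i : Fin n1) → Fin (m i) → ℝ),
      (∀ i', i' ≠ i → ∀ p, d i' p = 0) →
      ∀ t : ℝ, f (x + t • d) = f x + t * (f (x + d) - f x)) :
    ∃ x : (i : Fin n1) → Fin (m i) → ℝ,
      (∀ i p, 0 ≤ x i p) ∧ (∀ i, ∑ p, x i p = α i) ∧
      (∀ i, ∃ p, x i p = α i ∧ ∀ q, q ≠ p → x i q = 0) ∧
      (Finset.univ.filter fun s : Σ i : Fin n1, Fin (m i) => x s.1 s.2 ≠ 0).card = n1 ∧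
      (∀ y : (i : Fin n1) → Fin (m i) → ℝ,
        (∀ i p, 0 ≤ y i p) → (∀ i, ∑ p, y i p = α i) → f x ≤ f y) ∧
      (∀ y : (i : Fin n1) → Fin (m i) → ℝ,
        (∀ i p, 0 ≤ y i p) → (∀ i, ∑ p, y i p = α i) →
        (Finset.univ.filter fun s : Σ i : Fin n1, Fin (m i) => y s.1 s.2 ≠ 0).card ≤ n1 →
        f x ≤ f y) :=
  stmt_10_general n1 m hm α hα f haffine
end

section
/- Let $x$ be a KKT point of the box-constrained quadratic-penalty problem $\min\{\theta(x) := f(x) + \frac{\sigma}{2}\sum_{i=1}^{n_1}(e^T \bar x_i - 1)^2 : 0 \leq x \leq M\}$ with $\sigma > 0$ and $M \geq 1$, where $f(x) = -\frac{1}{6}\mathcal{A}x^3$ with $\mathcal{A}$ nonnegative and symmetric. Then the constraint violations $h_i = e^T \bar x_i - 1$ satisfy $h_i \geq 0$ for all $i = 1,\dots,n_1$. -/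
/-!
Since `𝒜 ≥ 0` and `x ≥ 0`, the gradient of `f = -(1/6) 𝒜x³` is nonpositive. In a block that has
a coordinate below `M`, the KKT condition at that coordinate gives `gᵢₚ + σ hᵢ ≥ 0`, hence
`σ hᵢ ≥ -gᵢₚ ≥ 0`. A block with every coordinate at `M` has `hᵢ = n₂ M - 1 ≥ 0` outright.
-/

open Finset

theorem fderiv_cubic_nonneg {ι V : Type*} [Fintype ι] [NormedAddCommGroup V] [NormedSpace ℝ V]
    (A : ι → ι → ι → ℝ) (ℓ : ι → V →L[ℝ] ℝ) {x v : V}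
    (hA : ∀ a b c, 0 ≤ A a b c) (hx : ∀ a, 0 ≤ ℓ a x) (hv : ∀ a, 0 ≤ ℓ a v) :
    0 ≤ fderiv ℝ (fun y => ∑ a, ∑ b, ∑ c, A a b c * ℓ a y * ℓ b y * ℓ c y) x v := by
  have hD : HasFDerivAt (fun y => ∑ a, ∑ b, ∑ c, A a b c * ℓ a y * ℓ b y * ℓ c y)
      (∑ a, ∑ b, ∑ c, ((A a b c * ℓ a x * ℓ b x) • ℓ c +
        ℓ c x • ((A a b c * ℓ a x) • ℓ b + ℓ b x • (A a b c • ℓ a)))) x :=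
    HasFDerivAt.fun_sum fun a _ => HasFDerivAt.fun_sum fun b _ => HasFDerivAt.fun_sum fun c _ =>
      ((((ℓ a).hasFDerivAt).const_mul (A a b c)).mul (ℓ b).hasFDerivAt).mul (ℓ c).hasFDerivAt
  rw [hD.fderiv]
  simp only [_root_.sum_apply, add_apply, smul_apply, smul_eq_mul]
  refine sum_nonneg fun a _ => sum_nonneg fun b _ => sum_nonneg fun c _ => ?_
  have := hA a b c; have := hx a; have := hx b; have := hx c
  have := hv a; have := hv b; have := hv c
  positivity

theorem sum_sub_one_nonneg_of_kkt {ι : Type*} [Fintype ι] [Nonempty ι] {σ M : ℝ}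
    (hσ : 0 < σ) (hM : 1 ≤ M) {y g : ι → ℝ} (hy : ∀ p, 0 ≤ y p ∧ y p ≤ M) (hg : ∀ p, g p ≤ 0)
    (hzero : ∀ p, y p = 0 → 0 ≤ g p + σ * ((∑ q, y q) - 1))
    (hmid : ∀ p, 0 < y p → y p < M → g p + σ * ((∑ q, y q) - 1) = 0) :
    0 ≤ (∑ q, y q) - 1 := by
  by_cases hbelow : ∃ p, y p < M
  · obtain ⟨p, hp⟩ := hbelow
    have hkkt : 0 ≤ g p + σ * ((∑ q, y q) - 1) := by
      rcases (hy p).1.eq_or_lt with h0 | hpos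
      · exact hzero p h0.symm
      · exact (hmid p hpos hp).ge
    exact nonneg_of_mul_nonneg_right (by linarith [hg p]) hσ
  · simp only [not_exists, not_lt] at hbelow
    have hall : ∀ p, y p = M := fun p => le_antisymm (hy p).2 (hbelow p)
    have hcard : (1 : ℝ) ≤ Fintype.card ι := Nat.one_le_cast.2 Fintype.card_pos
    simp only [hall, sum_const, card_univ, nsmul_eq_mul, sub_nonneg]
    exact one_le_mul_of_one_le_of_one_le hcard hM

theorem stmt_12_general (n1 n2 : ℕ) (hn2 : 0 < n2)
    (A : (Fin n1 × Fin n2) → (Fin n1 × Fin n2) → (Fin n1 × Fin n2) → ℝ)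
    (hA0 : ∀ a b c, 0 ≤ A a b c)
    (f : (Fin n1 → Fin n2 → ℝ) → ℝ)
    (hf : ∀ x, f x = -(1/6) * ∑ a : Fin n1 × Fin n2, ∑ b : Fin n1 × Fin n2,
      ∑ c : Fin n1 × Fin n2, A a b c * x a.1 a.2 * x b.1 b.2 * x c.1 c.2)
    (σ M : ℝ) (hσ : 0 < σ) (hM : 1 ≤ M)
    (x : Fin n1 → Fin n2 → ℝ)
    (hbox : ∀ i p, 0 ≤ x i p ∧ x i p ≤ M)
    (g : Fin n1 → Fin n2 → ℝ)
    (hg : ∀ i p, g i p = fderiv ℝ f x (Pi.single i (Pi.single p 1)))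
    (hzero : ∀ i p, x i p = 0 → 0 ≤ g i p + σ * ((∑ q, x i q) - 1))
    (hmid : ∀ i p, 0 < x i p → x i p < M → g i p + σ * ((∑ q, x i q) - 1) = 0) :
    ∀ i, 0 ≤ (∑ q, x i q) - 1 := by
  let ev (a : Fin n1 × Fin n2) : (Fin n1 → Fin n2 → ℝ) →L[ℝ] ℝ :=
    (ContinuousLinearMap.proj (R := ℝ) (φ := fun _ : Fin n2 => ℝ) a.2).comp
      (ContinuousLinearMap.proj (φ := fun _ : Fin n1 => Fin n2 → ℝ) a.1)
  let F := fun y => ∑ a, ∑ b, ∑ c, A a b c * ev a y * ev b y * ev c y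
  have hfF : f = fun y => -(1/6) * F y := funext hf
  have hgrad : ∀ i p, g i p ≤ 0 := by
    intro i p
    have hv : (0 : Fin n1 → Fin n2 → ℝ) ≤ Pi.single i (Pi.single p 1) :=
      Pi.single_nonneg.2 (Pi.single_nonneg.2 zero_le_one)
    have hF : 0 ≤ fderiv ℝ F x (Pi.single i (Pi.single p 1)) :=
      fderiv_cubic_nonneg A ev hA0 (fun a => (hbox a.1 a.2).1) (fun a => hv a.1 a.2)
    rw [hg, hfF, fderiv_const_mul (by fun_prop)]
    simp only [smul_apply, smul_eq_mul]
    linarith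
  have : Nonempty (Fin n2) := ⟨⟨0, hn2⟩⟩
  exact fun i => sum_sub_one_nonneg_of_kkt hσ hM (hbox i) (hgrad i) (hzero i) (hmid i)

/-- at a KKT point of the box-constrained quadratic penalty problem, the
equality-constraint violations `h_i = eᵀx̄_i - 1` are nonnegative. -/
theorem stmt_12 (n1 n2 : ℕ) (hn2 : 0 < n2)
    (A : (Fin n1 × Fin n2) → (Fin n1 × Fin n2) → (Fin n1 × Fin n2) → ℝ)
    (hA0 : ∀ a b c, 0 ≤ A a b c)
    (hsym : ∀ a b c, A a b c = A b a c ∧ A a b c = A a c b)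
    (f : (Fin n1 → Fin n2 → ℝ) → ℝ)
    (hf : ∀ x, f x = -(1/6) * ∑ a : Fin n1 × Fin n2, ∑ b : Fin n1 × Fin n2,
      ∑ c : Fin n1 × Fin n2, A a b c * x a.1 a.2 * x b.1 b.2 * x c.1 c.2)
    (σ M : ℝ) (hσ : 0 < σ) (hM : 1 ≤ M)
    (x : Fin n1 → Fin n2 → ℝ)
    (hbox : ∀ i p, 0 ≤ x i p ∧ x i p ≤ M)
    (g : Fin n1 → Fin n2 → ℝ)
    (hg : ∀ i p, g i p = fderiv ℝ f x (Pi.single i (Pi.single p 1)))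
    (hzero : ∀ i p, x i p = 0 → 0 ≤ g i p + σ * ((∑ q, x i q) - 1))
    (hmid : ∀ i p, 0 < x i p → x i p < M → g i p + σ * ((∑ q, x i q) - 1) = 0)
    (htop : ∀ i p, x i p = M → g i p + σ * ((∑ q, x i q) - 1) ≤ 0) :
    ∀ i, 0 ≤ (∑ q, x i q) - 1 :=
  stmt_12_general n1 n2 hn2 A hA0 f hf σ M hσ hM x hbox g hg hzero hmid
end

section
/- Let $\{x^k\}_{k \in K}$ be a sequence in $\mathbb{R}^n$ converging to $z$, where $z$ is a global minimizer of $\min\{f(x): x \geq 0,\ e^T\bar x_i = 1\ \forall i\}$. Suppose there exists $k_0$ such that $\|x^k\|_0 = n_1$ for all $k \geq k_0$, $k \in K$. Then there exists $k_1 \geq k_0$ such that the support of $x^k$ equals the support of $z$ for all $k \geq k_1$, $k \in K$; in particular $\|z\|_0 = n_1$, making $z$ a global minimizer of the sparse-constrained problem. -/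
/-!
Near the limit `z`, every nonzero entry of `z` stays nonzero in `x k`, so the support of `z`
is eventually contained in that of `x k`. Each row of `z` sums to `1`, hence has a nonzero
entry, so `z` has at least `n1` nonzero entries; as `x k` has exactly `n1` of them for large
`k ∈ K`, the inclusion is an equality.
-/

open Filter Finset

section EntrySupport

variable {ι κ M : Type*} [Fintype ι] [Fintype κ] [Zero M] [DecidableEq M]

/-- The paper's `Γ(z)` for a vector of `n₁` blocks of length `n₂`, indexed by (block, position). -/
def entrySupport (z : ι → κ → M) : Finset (ι × κ) :=
  univ.filter fun ip => z ip.1 ip.2 ≠ 0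

theorem mem_entrySupport {z : ι → κ → M} {ip : ι × κ} :
    ip ∈ entrySupport z ↔ z ip.1 ip.2 ≠ 0 := by
  simp [entrySupport]

theorem card_le_card_entrySupport {z : ι → κ → M} (hrow : ∀ i, ∃ p, z i p ≠ 0) :
    Fintype.card ι ≤ #(entrySupport z) := by
  choose g hg using hrow
  let graph : ι ↪ ι × κ := ⟨fun i => (i, g i), fun _ _ h => (Prod.mk.inj h).1⟩
  calc Fintype.card ι = #(univ.map graph) := (card_map graph).symm
    _ ≤ #(entrySupport z) :=
        card_le_card fun ip hip => by
          obtain ⟨i, -, rfl⟩ := mem_map.mp hip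
          exact mem_entrySupport.mpr (hg i)

theorem card_le_card_entrySupport_of_sum_eq_one {R : Type*} [AddCommMonoid R] [One R]
    [NeZero (1 : R)] [DecidableEq R] {z : ι → κ → R} (hsum : ∀ i, ∑ p, z i p = 1) :
    Fintype.card ι ≤ #(entrySupport z) :=
  card_le_card_entrySupport fun i =>
    let ⟨p, _, hp⟩ := exists_ne_zero_of_sum_ne_zero ((hsum i).symm ▸ one_ne_zero)
    ⟨p, hp⟩

theorem Filter.Tendsto.eventually_entrySupport_subset [TopologicalSpace M] [T1Space M]
    {α : Type*} {l : Filter α} {x : α → ι → κ → M} {z : ι → κ → M}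
    (hconv : Tendsto x l (nhds z)) :
    ∀ᶠ k in l, entrySupport z ⊆ entrySupport (x k) := by
  have hentry : ∀ ip ∈ entrySupport z, ∀ᶠ k in l, ip ∈ entrySupport (x k) := fun ip hip =>
    have hcoord : Tendsto (fun k => x k ip.1 ip.2) l (nhds (z ip.1 ip.2)) :=
      (continuous_apply_apply ip.1 ip.2).continuousAt.tendsto.comp hconv
    (hcoord.eventually_ne (mem_entrySupport.mp hip)).mono fun _ => mem_entrySupport.mpr
  exact ((eventually_all_finset _).mpr hentry).mono fun _ h ip hip => h ip hip

end EntrySupport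

theorem stmt_15_general (n1 n2 : ℕ)
    (f : (Fin n1 → Fin n2 → ℝ) → ℝ)
    (x : ℕ → Fin n1 → Fin n2 → ℝ) (K : Set ℕ) (hK : K.Infinite)
    (z : Fin n1 → Fin n2 → ℝ)
    (hconv : Tendsto x (atTop ⊓ 𝓟 K) (nhds z))
    (hzsum : ∀ i, ∑ p, z i p = 1)
    (hzmin : ∀ y : Fin n1 → Fin n2 → ℝ,
      (∀ i p, 0 ≤ y i p) → (∀ i, ∑ p, y i p = 1) → f z ≤ f y)
    (k0 : ℕ)
    (hsupp : ∀ k ∈ K, k0 ≤ k →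
      (Finset.univ.filter fun ip : Fin n1 × Fin n2 => x k ip.1 ip.2 ≠ 0).card = n1) :
    (∃ k1, k0 ≤ k1 ∧ ∀ k ∈ K, k1 ≤ k →
      (Finset.univ.filter fun ip : Fin n1 × Fin n2 => x k ip.1 ip.2 ≠ 0) =
      (Finset.univ.filter fun ip : Fin n1 × Fin n2 => z ip.1 ip.2 ≠ 0)) ∧
    (Finset.univ.filter fun ip : Fin n1 × Fin n2 => z ip.1 ip.2 ≠ 0).card = n1 ∧
    (∀ y : Fin n1 → Fin n2 → ℝ,
      (∀ i p, 0 ≤ y i p) → (∀ i, ∑ p, y i p = 1) →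
      (Finset.univ.filter fun ip : Fin n1 × Fin n2 => y ip.1 ip.2 ≠ 0).card ≤ n1 →
      f z ≤ f y) := by
  have hzcard : n1 ≤ #(entrySupport z) := by
    simpa using card_le_card_entrySupport_of_sum_eq_one hzsum
  have hxcard : ∀ᶠ k in atTop ⊓ 𝓟 K, #(entrySupport (x k)) = n1 :=
    eventually_inf_principal.mpr <| (eventually_ge_atTop k0).mono fun k hk hkK => hsupp k hkK hk
  have hev : ∀ᶠ k in atTop ⊓ 𝓟 K,
      entrySupport (x k) = entrySupport z ∧ #(entrySupport (x k)) = n1 :=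
    (hconv.eventually_entrySupport_subset.and hxcard).mono fun _ ⟨hsub, hcard⟩ =>
      ⟨(eq_of_subset_of_card_le hsub (hcard.le.trans hzcard)).symm, hcard⟩
  refine ⟨?_, ?_, fun y hy hysum _ => hzmin y hy hysum⟩
  · obtain ⟨N, hN⟩ := eventually_atTop.mp (eventually_inf_principal.mp hev)
    exact ⟨max N k0, le_max_right _ _, fun k hkK hk => (hN k (le_of_max_le_left hk) hkK).1⟩
  · have : (atTop ⊓ 𝓟 K).NeBot := by
      rwa [← Nat.cofinite_eq_atTop, cofinite_inf_principal_neBot_iff]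
    obtain ⟨k, hsame, hcard⟩ := hev.exists
    exact (congrArg card hsame).symm.trans hcard

/-- if a subsequence converging to a global minimizer `z` of the relaxation
eventually has exactly `n1` nonzero entries, then its support eventually coincides with
that of `z`; in particular `‖z‖₀ = n1` and `z` is a global minimizer of the
sparse-constrained problem. -/
theorem stmt_15 (n1 n2 : ℕ)
    (f : (Fin n1 → Fin n2 → ℝ) → ℝ)
    (x : ℕ → Fin n1 → Fin n2 → ℝ) (K : Set ℕ) (hK : K.Infinite)
    (z : Fin n1 → Fin n2 → ℝ)
    (hconv : Tendsto x (atTop ⊓ 𝓟 K) (nhds z))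
    (hznn : ∀ i p, 0 ≤ z i p) (hzsum : ∀ i, ∑ p, z i p = 1)
    (hzmin : ∀ y : Fin n1 → Fin n2 → ℝ,
      (∀ i p, 0 ≤ y i p) → (∀ i, ∑ p, y i p = 1) → f z ≤ f y)
    (k0 : ℕ)
    (hsupp : ∀ k ∈ K, k0 ≤ k →
      (Finset.univ.filter fun ip : Fin n1 × Fin n2 => x k ip.1 ip.2 ≠ 0).card = n1) :
    (∃ k1, k0 ≤ k1 ∧ ∀ k ∈ K, k1 ≤ k →
      (Finset.univ.filter fun ip : Fin n1 × Fin n2 => x k ip.1 ip.2 ≠ 0) =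
      (Finset.univ.filter fun ip : Fin n1 × Fin n2 => z ip.1 ip.2 ≠ 0)) ∧
    (Finset.univ.filter fun ip : Fin n1 × Fin n2 => z ip.1 ip.2 ≠ 0).card = n1 ∧
    (∀ y : Fin n1 → Fin n2 → ℝ,
      (∀ i p, 0 ≤ y i p) → (∀ i, ∑ p, y i p = 1) →
      (Finset.univ.filter fun ip : Fin n1 × Fin n2 => y ip.1 ip.2 ≠ 0).card ≤ n1 →
      f z ≤ f y) :=
  stmt_15_general n1 n2 f x K hK z hconv hzsum hzmin k0 hsupp
end
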